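/- arXiv:1606.05061 — 6 statements merged into one kernel-verified Lean document; each statement's English description precedes it below -/
import Mathlib

section
/- Perfect embezzlement is impossible in the tensor product framework, even with ancillas: for all types G_A, R_A, R_B, G_B, writing X := G_A × Fin 2 × R_A, Y := G_B × Fin 2 × R_B and K := ℓ²(X × Y), there do NOT exist unit vectors γ_A ∈ ℓ²(G_A), γ_B ∈ ℓ²(G_B), ψ ∈ ℓ²(R_A × R_B), a vector γ_AB ∈ ℓ²(G_A × G_B), unitary operators U_A on ℓ²(X) and U_B on ℓ²(Y), unitary operators W_A, W_B on K such that W_A is the amplification of U_A to the first factor and W_B is the amplification of U_B to the second factor, and vectors z, w ∈ K with coordinates z((g_A,i,r_A),(g_B,j,r_B)) = γ_A g_A * γ_B g_B * (if i = 0 ∧ j = 0 then ψ (r_A, r_B) else 0) and w((g_A,i,r_A),(g_B,j,r_B)) = γ_AB (g_A, g_B) * (if i = j then (1/√2) * ψ (r_A, r_B) else 0), satisfying W_A (W_B z) = w. -/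
/-- `ℓ²(X)`: the Hilbert space of square-summable families of complex numbers indexed by `X`. -/
noncomputable abbrev l2 (X : Type*) := lp (fun _ : X => ℂ) 2

/-- `W` is the amplification of `T` to the first factor of `ℓ²(X × Y)`. -/
def IsAmplificationFst {X Y : Type*} (T : l2 X ≃ₗᵢ[ℂ] l2 X)
    (W : l2 (X × Y) ≃ₗᵢ[ℂ] l2 (X × Y)) : Prop :=
  ∀ (f : l2 (X × Y)) (g : l2 X) (y : Y),
    (∀ x, g x = f (x, y)) → ∀ x, (W f) (x, y) = (T g) x

/-- `W` is the amplification of `T` to the second factor of `ℓ²(X × Y)`. -/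
def IsAmplificationSnd {X Y : Type*} (T : l2 Y ≃ₗᵢ[ℂ] l2 Y)
    (W : l2 (X × Y) ≃ₗᵢ[ℂ] l2 (X × Y)) : Prop :=
  ∀ (f : l2 (X × Y)) (g : l2 Y) (x : X),
    (∀ y, g y = f (x, y)) → ∀ y, (W f) (x, y) = (T g) y

/-!
Measure the entanglement of a bipartite vector `Φ ∈ ℓ²(A × B)` by the norm of the bilinear form
`(u, v) ↦ ⟪Φ, u ⊗ v⟫`, i.e. its injective norm or largest Schmidt coefficient. Local unitaries do
not change it, and appending a product ancilla `γ_A ⊗ γ_B ⊗ |00⟩` does not lower it, so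
`‖z‖_inj ≥ ‖ψ‖_inj`. On the other hand `‖H ⊗ Φ‖_inj ≤ ‖|H|‖_inj ‖Φ‖_inj`, where `|H|` is the
entrywise modulus; the Bell state has injective norm `1/√2` and `γ_AB` has norm `‖w‖ = 1`, so
`‖w‖_inj ≤ ‖ψ‖_inj / √2`. As `w = W_A W_B z`, this forces `‖ψ‖_inj = 0`, i.e. `ψ = 0`.
-/

open scoped InnerProductSpace lp ComplexConjugate

lemma memℓp_two_iff_summable_sq {A E : Type*} [NormedAddCommGroup E] {f : A → E} :
    Memℓp f 2 ↔ Summable fun a => ‖f a‖ ^ 2 := by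
  rw [memℓp_gen_iff (by norm_num)]
  norm_num

lemma norm_eq_of_inner_self_eq {𝕜 E : Type*} [RCLike 𝕜] [NormedAddCommGroup E]
    [InnerProductSpace 𝕜 E] {x : E} {r : ℝ} (hr : 0 ≤ r) (h : ⟪x, x⟫_𝕜 = (r : 𝕜) ^ 2) :
    ‖x‖ = r := by
  rw [inner_self_eq_norm_sq_to_K] at h
  exact (sq_eq_sq₀ (norm_nonneg _) hr).1 (by exact_mod_cast h)

namespace lp

variable {𝕜 : Type*} [RCLike 𝕜] {A B C D : Type*}

lemma summable_norm_sq {E : Type*} [NormedAddCommGroup E] (f : ℓ^2(A, E)) :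
    Summable fun a => ‖f a‖ ^ 2 :=
  memℓp_two_iff_summable_sq.1 (lp.memℓp f)

lemma norm_sq_eq_tsum {E : Type*} [NormedAddCommGroup E] (f : ℓ^2(A, E)) :
    ‖f‖ ^ 2 = ∑' a, ‖f a‖ ^ 2 := by
  simpa using lp.norm_rpow_eq_tsum (p := 2) (by norm_num) f

lemma summable_norm_inner (f g : ℓ^2(A, 𝕜)) : Summable fun a => ‖⟪f a, g a⟫_𝕜‖ :=
  (lp.summable_mul (by norm_num [Real.holderConjugate_iff]) f g).congr fun a => by
    rw [RCLike.inner_apply, norm_mul, RCLike.norm_conj, mul_comm]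

noncomputable def tens (f : ℓ^2(A, 𝕜)) (g : ℓ^2(B, 𝕜)) : ℓ^2(A × B, 𝕜) :=
  ⟨fun p => f p.1 * g p.2, memℓp_two_iff_summable_sq.2 <|
    ((summable_norm_sq f).mul_of_nonneg (summable_norm_sq g) (fun _ => by positivity)
      fun _ => by positivity).congr fun p => by rw [norm_mul, mul_pow]⟩

@[simp] lemma tens_apply (f : ℓ^2(A, 𝕜)) (g : ℓ^2(B, 𝕜)) (p : A × B) :
    tens f g p = f p.1 * g p.2 := rfl

lemma inner_tens (f f' : ℓ^2(A, 𝕜)) (g g' : ℓ^2(B, 𝕜)) :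
    ⟪tens f g, tens f' g'⟫_𝕜 = ⟪f, f'⟫_𝕜 * ⟪g, g'⟫_𝕜 := by
  rw [lp.inner_eq_tsum, lp.inner_eq_tsum, lp.inner_eq_tsum]
  refine Eq.trans (tsum_congr fun p => ?_)
    (tsum_mul_tsum_of_summable_norm (summable_norm_inner f f') (summable_norm_inner g g')).symm
  simp only [tens_apply, RCLike.inner_apply, map_mul]
  ring

lemma norm_tens (f : ℓ^2(A, 𝕜)) (g : ℓ^2(B, 𝕜)) : ‖tens f g‖ = ‖f‖ * ‖g‖ :=
  norm_eq_of_inner_self_eq (by positivity) <| by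
    rw [inner_tens, inner_self_eq_norm_sq_to_K, inner_self_eq_norm_sq_to_K]
    push_cast
    ring

noncomputable def reindex (e : A ≃ B) (f : ℓ^2(B, 𝕜)) : ℓ^2(A, 𝕜) :=
  ⟨fun a => f (e a), memℓp_two_iff_summable_sq.2 <|
    (e.summable_iff (f := fun b => ‖f b‖ ^ 2)).2 (summable_norm_sq f)⟩

@[simp] lemma reindex_apply (e : A ≃ B) (f : ℓ^2(B, 𝕜)) (a : A) :
    reindex e f a = f (e a) := rfl

lemma inner_reindex (e : A ≃ B) (f g : ℓ^2(B, 𝕜)) :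
    ⟪reindex e f, reindex e g⟫_𝕜 = ⟪f, g⟫_𝕜 :=
  e.tsum_eq fun b => ⟪f b, g b⟫_𝕜

lemma norm_reindex (e : A ≃ B) (f : ℓ^2(B, 𝕜)) : ‖reindex e f‖ = ‖f‖ :=
  norm_eq_of_inner_self_eq (norm_nonneg _) <| by rw [inner_reindex, inner_self_eq_norm_sq_to_K]

noncomputable def bipartiteTens (H : ℓ^2(A × B, 𝕜)) (Φ : ℓ^2(C × D, 𝕜)) :
    ℓ^2((A × C) × (B × D), 𝕜) :=
  reindex (Equiv.prodProdProdComm A C B D) (tens H Φ)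

@[simp] lemma bipartiteTens_apply (H : ℓ^2(A × B, 𝕜)) (Φ : ℓ^2(C × D, 𝕜)) (a : A) (c : C)
    (b : B) (d : D) : bipartiteTens H Φ ((a, c), (b, d)) = H (a, b) * Φ (c, d) := rfl

lemma inner_bipartiteTens (H H' : ℓ^2(A × B, 𝕜)) (Φ Φ' : ℓ^2(C × D, 𝕜)) :
    ⟪bipartiteTens H Φ, bipartiteTens H' Φ'⟫_𝕜 = ⟪H, H'⟫_𝕜 * ⟪Φ, Φ'⟫_𝕜 := by
  rw [bipartiteTens, bipartiteTens, inner_reindex, inner_tens]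

lemma norm_bipartiteTens (H : ℓ^2(A × B, 𝕜)) (Φ : ℓ^2(C × D, 𝕜)) :
    ‖bipartiteTens H Φ‖ = ‖H‖ * ‖Φ‖ := by
  rw [bipartiteTens, norm_reindex, norm_tens]

lemma tens_tens_eq_bipartiteTens (a : ℓ^2(A, 𝕜)) (b : ℓ^2(B, 𝕜)) (c : ℓ^2(C, 𝕜))
    (d : ℓ^2(D, 𝕜)) : tens (tens a c) (tens b d) = bipartiteTens (tens a b) (tens c d) := by
  ext ⟨⟨a, c⟩, ⟨b, d⟩⟩
  simp only [tens_apply, bipartiteTens_apply]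
  ring

noncomputable def slice (u : ℓ^2(A × C, 𝕜)) (a : A) : ℓ^2(C, 𝕜) :=
  ⟨fun c => u (a, c), memℓp_two_iff_summable_sq.2 ((summable_norm_sq u).prod_factor a)⟩

@[simp] lemma slice_apply (u : ℓ^2(A × C, 𝕜)) (a : A) (c : C) : slice u a c = u (a, c) := rfl

lemma hasSum_norm_slice_sq (u : ℓ^2(A × C, 𝕜)) :
    HasSum (fun a => ‖slice u a‖ ^ 2) (‖u‖ ^ 2) := by
  have hu := summable_norm_sq u
  simp_rw [norm_sq_eq_tsum]
  exact hu.hasSum.prod_fiberwise fun a => (hu.prod_factor a).hasSum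

noncomputable def sliceNorms (u : ℓ^2(A × C, 𝕜)) : ℓ^2(A, ℝ) :=
  ⟨fun a => ‖slice u a‖, memℓp_two_iff_summable_sq.2 <| by
    simpa only [norm_norm] using (hasSum_norm_slice_sq u).summable⟩

@[simp] lemma sliceNorms_apply (u : ℓ^2(A × C, 𝕜)) (a : A) : sliceNorms u a = ‖slice u a‖ :=
  rfl

lemma norm_sliceNorms (u : ℓ^2(A × C, 𝕜)) : ‖sliceNorms u‖ = ‖u‖ := by
  refine (sq_eq_sq₀ (norm_nonneg _) (norm_nonneg _)).1 ?_
  rw [norm_sq_eq_tsum, ← (hasSum_norm_slice_sq u).tsum_eq]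
  simp only [sliceNorms_apply, norm_norm]

lemma inner_bipartiteTens_tens (H : ℓ^2(A × B, 𝕜)) (Φ : ℓ^2(C × D, 𝕜)) (u : ℓ^2(A × C, 𝕜))
    (v : ℓ^2(B × D, 𝕜)) : ⟪bipartiteTens H Φ, tens u v⟫_𝕜 =
      ∑' p : A × B, conj (H p) * ⟪Φ, tens (slice u p.1) (slice v p.2)⟫_𝕜 := by
  set e := Equiv.prodProdProdComm A C B D
  have huv : tens u v = reindex e (reindex e.symm (tens u v)) := by ext; simp
  have hs := lp.summable_inner (𝕜 := 𝕜) (tens H Φ) (reindex e.symm (tens u v))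
  rw [bipartiteTens, huv, inner_reindex, lp.inner_eq_tsum, hs.tsum_prod' hs.prod_factor]
  refine tsum_congr fun p => ?_
  rw [lp.inner_eq_tsum, ← tsum_mul_left]
  refine tsum_congr fun q => ?_
  simp only [tens_apply, Equiv.prodProdProdComm_symm, reindex_apply,
    Equiv.prodProdProdComm_apply, RCLike.inner_apply, map_mul, slice_apply, e]
  ring

/-- `‖productForm Φ‖` is the injective norm of `Φ`, i.e. its largest Schmidt coefficient. -/
noncomputable def productForm (Φ : ℓ^2(A × B, 𝕜)) : ℓ^2(A, 𝕜) →L[𝕜] ℓ^2(B, 𝕜) →L[𝕜] 𝕜 :=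
  LinearMap.mkContinuous₂
    (LinearMap.mk₂ 𝕜 (fun u v => ⟪Φ, tens u v⟫_𝕜)
      (fun u u' v => by rw [← inner_add_right]; congr 1; ext; simp [add_mul])
      (fun c u v => by rw [smul_eq_mul, ← inner_smul_right]; congr 1; ext; simp [mul_assoc])
      (fun u v v' => by rw [← inner_add_right]; congr 1; ext; simp [mul_add])
      (fun c u v => by rw [smul_eq_mul, ← inner_smul_right]; congr 1; ext; simp [mul_left_comm]))
    ‖Φ‖ fun u v => by
      simpa [norm_tens, mul_assoc] using norm_inner_le_norm (𝕜 := 𝕜) Φ (tens u v)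

@[simp] lemma productForm_apply (Φ : ℓ^2(A × B, 𝕜)) (u : ℓ^2(A, 𝕜)) (v : ℓ^2(B, 𝕜)) :
    productForm Φ u v = ⟪Φ, tens u v⟫_𝕜 := rfl

lemma norm_inner_tens_le (Φ : ℓ^2(A × B, 𝕜)) (u : ℓ^2(A, 𝕜)) (v : ℓ^2(B, 𝕜)) :
    ‖⟪Φ, tens u v⟫_𝕜‖ ≤ ‖productForm Φ‖ * ‖u‖ * ‖v‖ :=
  (productForm Φ).le_opNorm₂ u v

lemma norm_productForm_le_of_bound {Φ : ℓ^2(A × B, 𝕜)} {M : ℝ} (hM : 0 ≤ M)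
    (h : ∀ u v, ‖⟪Φ, tens u v⟫_𝕜‖ ≤ M * ‖u‖ * ‖v‖) : ‖productForm Φ‖ ≤ M :=
  (productForm Φ).opNorm_le_bound₂ hM h

lemma norm_productForm_le (Φ : ℓ^2(A × B, 𝕜)) : ‖productForm Φ‖ ≤ ‖Φ‖ :=
  LinearMap.mkContinuous₂_norm_le _ (norm_nonneg _) _

lemma norm_productForm_eq_zero_iff {Φ : ℓ^2(A × B, 𝕜)} : ‖productForm Φ‖ = 0 ↔ Φ = 0 := by
  classical
  constructor
  · intro h
    ext ⟨a, b⟩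
    have hab : tens (lp.single 2 a (1 : 𝕜)) (lp.single 2 b 1) = lp.single 2 (a, b) 1 := by
      ext ⟨a', b'⟩
      by_cases ha : a' = a <;> by_cases hb : b' = b <;> simp [lp.single_apply, ha, hb]
    simpa [hab, lp.inner_single_right, RCLike.inner_apply] using
      congrArg (fun F => F (lp.single 2 a 1) (lp.single 2 b 1))
        ((productForm Φ).opNorm_zero_iff.1 h)
  · rintro rfl
    exact le_antisymm ((norm_productForm_le 0).trans_eq norm_zero) (by positivity)

lemma norm_inner_bipartiteTens_tens_le (H : ℓ^2(A × B, 𝕜)) (Φ : ℓ^2(C × D, 𝕜))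
    (u : ℓ^2(A × C, 𝕜)) (v : ℓ^2(B × D, 𝕜)) : ‖⟪bipartiteTens H Φ, tens u v⟫_𝕜‖ ≤
      ‖productForm Φ‖ * ⟪lp.toNorm H, tens (sliceNorms u) (sliceNorms v)⟫_ℝ := by
  set F : A × B → 𝕜 := fun p => conj (H p) * ⟪Φ, tens (slice u p.1) (slice v p.2)⟫_𝕜
  set m : A × B → ℝ := fun p =>
    ‖productForm Φ‖ * ⟪lp.toNorm H p, tens (sliceNorms u) (sliceNorms v) p⟫_ℝ
  have hm : Summable m := (lp.summable_inner (𝕜 := ℝ) (lp.toNorm H)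
    (tens (sliceNorms u) (sliceNorms v))).mul_left ‖productForm Φ‖
  have hFm (p : A × B) : ‖F p‖ ≤ m p := by
    simp only [F, m, norm_mul, RCLike.norm_conj, RCLike.inner_apply, conj_trivial,
      lp.toNorm_coe, tens_apply, sliceNorms_apply]
    calc ‖H p‖ * ‖⟪Φ, tens (slice u p.1) (slice v p.2)⟫_𝕜‖
        ≤ ‖H p‖ * (‖productForm Φ‖ * ‖slice u p.1‖ * ‖slice v p.2‖) := by
          gcongr
          exact norm_inner_tens_le _ _ _
      _ = _ := by ring
  have hF : Summable fun p => ‖F p‖ := hm.of_nonneg_of_le (fun _ => norm_nonneg _) hFm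
  calc ‖⟪bipartiteTens H Φ, tens u v⟫_𝕜‖ = ‖∑' p, F p‖ := by rw [inner_bipartiteTens_tens]
    _ ≤ ∑' p, ‖F p‖ := norm_tsum_le_tsum_norm hF
    _ ≤ ∑' p, m p := hF.tsum_le_tsum hFm hm
    _ = _ := by rw [tsum_mul_left, lp.inner_eq_tsum]

lemma norm_productForm_bipartiteTens_le (H : ℓ^2(A × B, 𝕜)) (Φ : ℓ^2(C × D, 𝕜)) :
    ‖productForm (bipartiteTens H Φ)‖ ≤ ‖productForm (lp.toNorm H)‖ * ‖productForm Φ‖ :=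
  norm_productForm_le_of_bound (by positivity) fun u v => calc
    ‖⟪bipartiteTens H Φ, tens u v⟫_𝕜‖
      ≤ ‖productForm Φ‖ * ⟪lp.toNorm H, tens (sliceNorms u) (sliceNorms v)⟫_ℝ :=
        norm_inner_bipartiteTens_tens_le H Φ u v
    _ ≤ ‖productForm Φ‖ * (‖productForm (lp.toNorm H)‖ * ‖sliceNorms u‖ * ‖sliceNorms v‖) := by
        gcongr
        exact (Real.le_norm_self _).trans (norm_inner_tens_le _ _ _)
    _ = ‖productForm (lp.toNorm H)‖ * ‖productForm Φ‖ * ‖u‖ * ‖v‖ := by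
        rw [norm_sliceNorms, norm_sliceNorms]
        ring

lemma norm_productForm_bipartiteTens_le_norm_mul (H : ℓ^2(A × B, 𝕜)) (Φ : ℓ^2(C × D, 𝕜)) :
    ‖productForm (bipartiteTens H Φ)‖ ≤ ‖H‖ * ‖productForm Φ‖ := by
  refine (norm_productForm_bipartiteTens_le H Φ).trans ?_
  gcongr
  exact (norm_productForm_le _).trans_eq lp.norm_toNorm

lemma norm_productForm_le_bipartiteTens_tens {a : ℓ^2(A, 𝕜)} {b : ℓ^2(B, 𝕜)} (ha : ‖a‖ = 1)
    (hb : ‖b‖ = 1) (Φ : ℓ^2(C × D, 𝕜)) :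
    ‖productForm Φ‖ ≤ ‖productForm (bipartiteTens (tens a b) Φ)‖ :=
  norm_productForm_le_of_bound (by positivity) fun c d => calc
    ‖⟪Φ, tens c d⟫_𝕜‖ = ‖⟪bipartiteTens (tens a b) Φ, tens (tens a c) (tens b d)⟫_𝕜‖ := by
        rw [tens_tens_eq_bipartiteTens, inner_bipartiteTens, inner_self_eq_norm_sq_to_K,
          norm_tens, ha, hb]
        simp
    _ ≤ ‖productForm (bipartiteTens (tens a b) Φ)‖ * ‖tens a c‖ * ‖tens b d‖ :=
        norm_inner_tens_le _ _ _
    _ = ‖productForm (bipartiteTens (tens a b) Φ)‖ * ‖c‖ * ‖d‖ := by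
        rw [norm_tens, norm_tens, ha, hb, one_mul, one_mul]

section Diagonal

variable (ι : Type*) [Fintype ι] [DecidableEq ι]

noncomputable def diagonalVec (c : 𝕜) : ℓ^2(ι × ι, 𝕜) :=
  ⟨fun p => if p.1 = p.2 then c else 0, Memℓp.all _⟩

lemma diagonalVec_apply (c : 𝕜) (i j : ι) :
    diagonalVec ι c (i, j) = if i = j then c else 0 := rfl

lemma norm_diagonalVec (c : 𝕜) : ‖diagonalVec ι c‖ = √(Fintype.card ι) * ‖c‖ := by
  refine (sq_eq_sq₀ (norm_nonneg _) (by positivity)).1 ?_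
  rw [norm_sq_eq_tsum, tsum_fintype, Fintype.sum_prod_type, mul_pow,
    Real.sq_sqrt (Nat.cast_nonneg _)]
  simp [diagonalVec_apply, apply_ite]

lemma toNorm_diagonalVec (c : 𝕜) : lp.toNorm (diagonalVec ι c) = diagonalVec ι ‖c‖ := by
  ext ⟨i, j⟩
  by_cases h : i = j <;> simp [diagonalVec_apply, h]

lemma norm_productForm_diagonalVec_le (c : 𝕜) : ‖productForm (diagonalVec ι c)‖ ≤ ‖c‖ :=
  norm_productForm_le_of_bound (norm_nonneg _) fun u v => calc
    ‖⟪diagonalVec ι c, tens u v⟫_𝕜‖ = ‖∑ i, u i * v i * conj c‖ := by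
        rw [lp.inner_eq_tsum, tsum_fintype, Fintype.sum_prod_type]
        simp [diagonalVec_apply, RCLike.inner_apply, apply_ite (starRingEnd 𝕜)]
    _ ≤ ‖c‖ * ∑' i, ‖u i‖ * ‖v i‖ := by
        rw [tsum_fintype, Finset.mul_sum]
        refine (norm_sum_le _ _).trans_eq (Finset.sum_congr rfl fun i _ => ?_)
        rw [norm_mul, norm_mul, RCLike.norm_conj, mul_comm]
    _ ≤ ‖c‖ * ‖u‖ * ‖v‖ := by
        rw [mul_assoc]
        gcongr
        exact lp.tsum_mul_le_mul_norm' (by norm_num [Real.holderConjugate_iff]) u v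

lemma norm_productForm_bipartiteTens_diagonalVec_le (c : 𝕜) (Φ : ℓ^2(C × D, 𝕜)) :
    ‖productForm (bipartiteTens (diagonalVec ι c) Φ)‖ ≤ ‖c‖ * ‖productForm Φ‖ := by
  refine (norm_productForm_bipartiteTens_le _ Φ).trans ?_
  gcongr
  rw [toNorm_diagonalVec]
  exact (norm_productForm_diagonalVec_le ι _).trans_eq (norm_norm c)

end Diagonal

end lp

open lp

section Amplification

variable {X Y : Type*}

lemma IsAmplificationFst.map_tens {T : l2 X ≃ₗᵢ[ℂ] l2 X} {W : l2 (X × Y) ≃ₗᵢ[ℂ] l2 (X × Y)}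
    (h : IsAmplificationFst T W) (a : l2 X) (b : l2 Y) : W (tens a b) = tens (T a) b := by
  ext ⟨x, y⟩
  rw [h (tens a b) (b y • a) y (fun x' => by simp [mul_comm]) x, map_smul]
  simp [mul_comm]

lemma IsAmplificationSnd.map_tens {T : l2 Y ≃ₗᵢ[ℂ] l2 Y} {W : l2 (X × Y) ≃ₗᵢ[ℂ] l2 (X × Y)}
    (h : IsAmplificationSnd T W) (a : l2 X) (b : l2 Y) : W (tens a b) = tens a (T b) := by
  ext ⟨x, y⟩
  rw [h (tens a b) (a x • b) x (fun y' => by simp) y, map_smul]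
  simp

lemma norm_productForm_le_of_isAmplification {UA : l2 X ≃ₗᵢ[ℂ] l2 X} {UB : l2 Y ≃ₗᵢ[ℂ] l2 Y}
    {WA WB : l2 (X × Y) ≃ₗᵢ[ℂ] l2 (X × Y)} (hA : IsAmplificationFst UA WA)
    (hB : IsAmplificationSnd UB WB) (Φ : l2 (X × Y)) :
    ‖productForm Φ‖ ≤ ‖productForm (WA (WB Φ))‖ :=
  norm_productForm_le_of_bound (by positivity) fun u v => calc
    ‖⟪Φ, tens u v⟫_ℂ‖ = ‖⟪WA (WB Φ), tens (UA u) (UB v)⟫_ℂ‖ := by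
        rw [← hA.map_tens, ← hB.map_tens, LinearIsometryEquiv.inner_map_map,
          LinearIsometryEquiv.inner_map_map]
    _ ≤ ‖productForm (WA (WB Φ))‖ * ‖UA u‖ * ‖UB v‖ := norm_inner_tens_le _ _ _
    _ = ‖productForm (WA (WB Φ))‖ * ‖u‖ * ‖v‖ := by
        rw [LinearIsometryEquiv.norm_map, LinearIsometryEquiv.norm_map]

end Amplification

/-- Perfect embezzlement is impossible in the tensor product framework,
even with ancillas. -/
theorem no_perfect_embezzlement_tensor (G_A R_A R_B G_B : Type*) :
    ¬ ∃ (γA : l2 G_A) (γB : l2 G_B) (ψ : l2 (R_A × R_B)) (γAB : l2 (G_A × G_B))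
        (UA : l2 (G_A × Fin 2 × R_A) ≃ₗᵢ[ℂ] l2 (G_A × Fin 2 × R_A))
        (UB : l2 (G_B × Fin 2 × R_B) ≃ₗᵢ[ℂ] l2 (G_B × Fin 2 × R_B))
        (WA WB : l2 ((G_A × Fin 2 × R_A) × (G_B × Fin 2 × R_B))
          ≃ₗᵢ[ℂ] l2 ((G_A × Fin 2 × R_A) × (G_B × Fin 2 × R_B)))
        (z w : l2 ((G_A × Fin 2 × R_A) × (G_B × Fin 2 × R_B))),
      ‖γA‖ = 1 ∧ ‖γB‖ = 1 ∧ ‖ψ‖ = 1 ∧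
      IsAmplificationFst UA WA ∧
      IsAmplificationSnd UB WB ∧
      (∀ (gA : G_A) (i : Fin 2) (rA : R_A) (gB : G_B) (j : Fin 2) (rB : R_B),
        z ((gA, i, rA), (gB, j, rB))
          = γA gA * γB gB * (if i = 0 ∧ j = 0 then ψ (rA, rB) else 0)) ∧
      (∀ (gA : G_A) (i : Fin 2) (rA : R_A) (gB : G_B) (j : Fin 2) (rB : R_B),
        w ((gA, i, rA), (gB, j, rB))
          = γAB (gA, gB) * (if i = j then (1 / Real.sqrt 2 : ℂ) * ψ (rA, rB) else 0)) ∧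
      WA (WB z) = w := by
  rintro ⟨γA, γB, ψ, γAB, UA, UB, WA, WB, z, w, hγA, hγB, hψ, hA, hB, hz, hw, hzw⟩
  set e₀ : l2 (Fin 2) := lp.single 2 0 1
  set bell := diagonalVec (Fin 2) (1 / Real.sqrt 2 : ℂ)
  have he₀ : ‖e₀‖ = 1 := by simp [e₀, lp.norm_single]
  have hz' : z = bipartiteTens (tens γA γB) (bipartiteTens (tens e₀ e₀) ψ) := by
    ext ⟨⟨gA, i, rA⟩, gB, j, rB⟩
    rw [hz]
    fin_cases i <;> fin_cases j <;> simp [e₀, lp.single_apply]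
  have hw' : w = bipartiteTens γAB (bipartiteTens bell ψ) := by
    ext ⟨⟨gA, i, rA⟩, gB, j, rB⟩
    rw [hw]
    by_cases hij : i = j <;> simp [bell, diagonalVec_apply, hij]
  have hγAB : ‖γAB‖ = 1 := by
    simpa [hz', hw', hγA, hγB, he₀, hψ, bell, norm_bipartiteTens, norm_tens,
      norm_diagonalVec, abs_of_nonneg (Real.sqrt_nonneg 2)] using (congrArg norm hzw).symm
  have hM : ‖productForm ψ‖ ≤ ‖productForm ψ‖ / Real.sqrt 2 := calc
    _ ≤ ‖productForm (bipartiteTens (tens e₀ e₀) ψ)‖ :=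
        norm_productForm_le_bipartiteTens_tens he₀ he₀ ψ
    _ ≤ ‖productForm z‖ := hz' ▸ norm_productForm_le_bipartiteTens_tens hγA hγB _
    _ ≤ ‖productForm w‖ := hzw ▸ norm_productForm_le_of_isAmplification hA hB z
    _ ≤ ‖γAB‖ * (‖(1 / Real.sqrt 2 : ℂ)‖ * ‖productForm ψ‖) := hw' ▸
        (norm_productForm_bipartiteTens_le_norm_mul _ _).trans
          (by gcongr; exact norm_productForm_bipartiteTens_diagonalVec_le _ _ _)
    _ = _ := by simp [hγAB, div_eq_inv_mul]
  have hM0 : ‖productForm ψ‖ = 0 :=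
    ((productForm ψ).opNorm_nonneg.eq_or_lt.resolve_right fun hpos =>
      (div_lt_self hpos Real.one_lt_sqrt_two).not_ge hM).symm
  simp [norm_productForm_eq_zero_iff.1 hM0] at hψ
end

section
/- Local unitaries preserve Schmidt decompositions: let X and Y be types, U_A a unitary operator on ℓ²(X), U_B a unitary operator on ℓ²(Y), and W_A, W_B unitary operators on ℓ²(X × Y) such that W_A is the amplification of U_A to the first factor and W_B is the amplification of U_B to the second factor. Suppose z ∈ ℓ²(X × Y), d : ℕ → ℝ is nonnegative with ∑' k, (d k)² < ∞, u : ℕ → ℓ²(X) and v : ℕ → ℓ²(Y) are orthonormal sequences, and for every (x, y), z (x, y) = ∑' k, (d k : ℂ) * (u k) x * (v k) y. Then the sequences k ↦ U_A (u k) and k ↦ U_B (v k) are orthonormal and for every (x, y), (W_A (W_B z)) (x, y) = ∑' k, (d k : ℂ) * (U_A (u k)) x * (U_B (v k)) y; in particular z and W_A (W_B z) have the same Schmidt coefficients. -/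
section
variable {α β ι : Type*} {E : Type*} [NormedAddCommGroup E] {p : ENNReal}

theorem Memℓp.comp_injective {f : α → E} (hf : Memℓp f p) {e : β → α} (he : e.Injective) :
    Memℓp (f ∘ e) p := by
  rcases p.trichotomy with rfl | rfl | hp
  · exact memℓp_zero ((memℓp_zero_iff.1 hf).preimage he.injOn)
  · exact memℓp_infty ((memℓp_infty_iff.1 hf).mono (Set.range_comp_subset_range e (‖f ·‖)))
  · exact memℓp_gen ((hf.summable hp).comp_injective he)

namespace lp

theorem tsum_apply [Fact (1 ≤ p)] {f : ι → lp (fun _ : α => E) p} (hf : Summable f) (a : α) :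
    (∑' k, f k) a = ∑' k, f k a :=
  hf.map_tsum ((Pi.evalAddMonoidHom _ a).comp (lp.coeFnAddMonoidHom _ p))
    (lp.lipschitzWith_one_eval p a).continuous

variable {X Y : Type*}

def sliceFst (z : lp (fun _ : X × Y => E) p) (y : Y) : lp (fun _ : X => E) p :=
  ⟨fun x => z (x, y), (lp.memℓp z).comp_injective (Prod.mk_left_injective y)⟩

def sliceSnd (z : lp (fun _ : X × Y => E) p) (x : X) : lp (fun _ : Y => E) p :=
  ⟨fun y => z (x, y), (lp.memℓp z).comp_injective (Prod.mk_right_injective x)⟩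

@[simp]
theorem sliceFst_apply (z : lp (fun _ : X × Y => E) p) (y : Y) (x : X) :
    sliceFst z y x = z (x, y) := rfl

@[simp]
theorem sliceSnd_apply (z : lp (fun _ : X × Y => E) p) (x : X) (y : Y) :
    sliceSnd z x y = z (x, y) := rfl

end lp
end

section
variable {X Y : Type*}

theorem IsAmplificationFst.apply_eq {T : l2 X ≃ₗᵢ[ℂ] l2 X} {W : l2 (X × Y) ≃ₗᵢ[ℂ] l2 (X × Y)}
    (hW : IsAmplificationFst T W) (f : l2 (X × Y)) (x : X) (y : Y) :
    W f (x, y) = T (lp.sliceFst f y) x :=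
  hW f _ y (fun _ => rfl) x

theorem IsAmplificationSnd.apply_eq {T : l2 Y ≃ₗᵢ[ℂ] l2 Y} {W : l2 (X × Y) ≃ₗᵢ[ℂ] l2 (X × Y)}
    (hW : IsAmplificationSnd T W) (f : l2 (X × Y)) (x : X) (y : Y) :
    W f (x, y) = T (lp.sliceSnd f x) y :=
  hW f _ x (fun _ => rfl) y

theorem Orthonormal.norm_apply_le_one {ι : Type*} {w : ι → l2 X} (hw : Orthonormal ℂ w)
    (k : ι) (x : X) : ‖w k x‖ ≤ 1 :=
  (lp.norm_apply_le_norm two_ne_zero (w k) x).trans (hw.1 k).le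

theorem summable_norm_mul_sq_of_norm_le_one {ι : Type*} {d : ι → ℝ} (hd : Summable fun k => d k ^ 2)
    {a : ι → ℂ} (ha : ∀ k, ‖a k‖ ≤ 1) : Summable fun k => ‖(d k : ℂ) * a k‖ ^ 2 := by
  refine hd.of_nonneg_of_le (fun k => by positivity) fun k => ?_
  rw [norm_mul, mul_pow, Complex.norm_real, Real.norm_eq_abs, sq_abs]
  exact mul_le_of_le_one_right (sq_nonneg _) (pow_le_one₀ (norm_nonneg _) (ha k))

theorem Orthonormal.map_apply_of_apply_eq_tsum {X' ι F : Type*} [FunLike F (l2 X) (l2 X')]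
    [ContinuousLinearMapClass F ℂ (l2 X) (l2 X')] {w : ι → l2 X}
    (hw : Orthonormal ℂ w) {c : ι → ℂ} (hc : Summable fun k => ‖c k‖ ^ 2)
    (T : F) {g : l2 X} (hg : ∀ x, g x = ∑' k, c k * w k x) (x' : X') :
    T g x' = ∑' k, c k * T (w k) x' := by
  have hs : Summable fun k => c k • w k := by
    simpa using (hw.orthogonalFamily.summable_iff_norm_sq_summable c).2 hc
  have hg_eq : g = ∑' k, c k • w k := lp.ext <| funext fun x => by
    simp [hg x, lp.tsum_apply hs]
  have hTs : Summable fun k => T (c k • w k) := hs.map T (map_continuous T)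
  rw [hg_eq, hs.map_tsum T (map_continuous T), lp.tsum_apply hTs]
  simp

end

theorem local_unitaries_preserve_schmidt_general {X Y : Type*}
    (UA : l2 X ≃ₗᵢ[ℂ] l2 X) (UB : l2 Y ≃ₗᵢ[ℂ] l2 Y)
    (WA WB : l2 (X × Y) ≃ₗᵢ[ℂ] l2 (X × Y))
    (hWA : IsAmplificationFst UA WA) (hWB : IsAmplificationSnd UB WB)
    (z : l2 (X × Y)) (d : ℕ → ℝ)
    (hsum : Summable fun k => (d k) ^ 2)
    (u : ℕ → l2 X) (v : ℕ → l2 Y)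
    (hu : Orthonormal ℂ u) (hv : Orthonormal ℂ v)
    (hz : ∀ (x : X) (y : Y), z (x, y) = ∑' k, (d k : ℂ) * (u k) x * (v k) y) :
    Orthonormal ℂ (fun k => UA (u k)) ∧
    Orthonormal ℂ (fun k => UB (v k)) ∧
    ∀ (x : X) (y : Y),
      (WA (WB z)) (x, y) = ∑' k, (d k : ℂ) * (UA (u k)) x * (UB (v k)) y := by
  have hUv : Orthonormal ℂ (fun k => UB (v k)) := hv.comp_linearIsometryEquiv UB
  refine ⟨hu.comp_linearIsometryEquiv UA, hUv, fun x y => ?_⟩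
  have hWBz : ∀ x', WB z (x', y) = ∑' k, ((d k : ℂ) * UB (v k) y) * u k x' := fun x' => by
    rw [hWB.apply_eq, hv.map_apply_of_apply_eq_tsum
      (summable_norm_mul_sq_of_norm_le_one hsum (hu.norm_apply_le_one · x')) UB
      (fun y' => by rw [lp.sliceSnd_apply, hz])]
    exact tsum_congr fun k => by ring
  rw [hWA.apply_eq, hu.map_apply_of_apply_eq_tsum
    (summable_norm_mul_sq_of_norm_le_one hsum (hUv.norm_apply_le_one · y)) UA
    (fun x' => by rw [lp.sliceFst_apply, hWBz])]
  exact tsum_congr fun k => by ring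

/-- Local unitaries preserve Schmidt decompositions: if `z` has Schmidt decomposition with
coefficients `d` and orthonormal sequences `u`, `v`, then `W_A (W_B z)` has Schmidt
decomposition with the same coefficients `d` and orthonormal sequences `U_A ∘ u`, `U_B ∘ v`. -/
theorem local_unitaries_preserve_schmidt {X Y : Type*}
    (UA : l2 X ≃ₗᵢ[ℂ] l2 X) (UB : l2 Y ≃ₗᵢ[ℂ] l2 Y)
    (WA WB : l2 (X × Y) ≃ₗᵢ[ℂ] l2 (X × Y))
    (hWA : IsAmplificationFst UA WA) (hWB : IsAmplificationSnd UB WB)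
    (z : l2 (X × Y)) (d : ℕ → ℝ) (hd : ∀ k, 0 ≤ d k)
    (hsum : Summable fun k => (d k) ^ 2)
    (u : ℕ → l2 X) (v : ℕ → l2 Y)
    (hu : Orthonormal ℂ u) (hv : Orthonormal ℂ v)
    (hz : ∀ (x : X) (y : Y), z (x, y) = ∑' k, (d k : ℂ) * (u k) x * (v k) y) :
    Orthonormal ℂ (fun k => UA (u k)) ∧
    Orthonormal ℂ (fun k => UB (v k)) ∧
    ∀ (x : X) (y : Y),
      (WA (WB z)) (x, y) = ∑' k, (d k : ℂ) * (UA (u k)) x * (UB (v k)) y :=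
  local_unitaries_preserve_schmidt_general UA UB WA WB hWA hWB z d hsum u v hu hv hz
end

section
/- Let H be a complex Hilbert space, C : H →L[ℂ] H a contraction (‖C‖ ≤ 1), and M a closed subspace of H that is invariant for C (C x ∈ M for all x ∈ M) and on which C acts as a unitary, i.e., ‖C x‖ = ‖x‖ for all x ∈ M and C maps M onto M. Then M is also invariant for the adjoint C†, and the restriction of C† to M is the inverse of the restriction of C: for all x ∈ M, C† x ∈ M, C (C† x) = x, and C† (C x) = x. -/
/-!
For a contraction `T`, equality `‖T x‖ = ‖x‖` forces `T† (T x) = x`: expanding,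
`‖T† T x - x‖² = ‖T† T x‖² - 2 ‖T x‖² + ‖x‖² ≤ 0`. Every `x ∈ M` is `C y` with `y ∈ M`,
so `C† x = y ∈ M` and `C (C† x) = x`.
-/

open scoped InnerProductSpace

namespace ContinuousLinearMap

variable {𝕜 E F : Type*} [RCLike 𝕜] [NormedAddCommGroup E] [InnerProductSpace 𝕜 E]
  [NormedAddCommGroup F] [InnerProductSpace 𝕜 F] [CompleteSpace E] [CompleteSpace F]

theorem adjoint_apply_apply_eq_of_norm_apply_eq (T : E →L[𝕜] F) (hT : ‖T‖ ≤ 1) {x : E}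
    (hx : ‖T x‖ = ‖x‖) : adjoint T (T x) = x := by
  set a := adjoint T (T x)
  have ha : ‖a‖ ≤ ‖x‖ :=
    calc ‖a‖ ≤ ‖adjoint T‖ * ‖T x‖ := le_opNorm _ _
      _ ≤ 1 * ‖x‖ := by rw [adjoint.norm_map, hx]; gcongr
      _ = ‖x‖ := one_mul _
  have hax : RCLike.re ⟪a, x⟫_𝕜 = ‖x‖ ^ 2 := by
    rw [adjoint_inner_left, inner_self_eq_norm_sq, hx]
  have hsq : ‖a - x‖ ^ 2 ≤ 0 := by
    rw [@norm_sub_sq 𝕜, hax]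
    nlinarith [norm_nonneg a, norm_nonneg x]
  rw [← sub_eq_zero, ← norm_eq_zero]
  nlinarith [norm_nonneg (a - x)]

end ContinuousLinearMap

theorem adjoint_invariant_of_contraction_unitary_on_invariant_subspace_general
    {H : Type*} [NormedAddCommGroup H] [InnerProductSpace ℂ H] [CompleteSpace H]
    (C : H →L[ℂ] H) (hC : ‖C‖ ≤ 1)
    (M : Submodule ℂ H)
    (hiso : ∀ x ∈ M, ‖C x‖ = ‖x‖)
    (honto : ∀ y ∈ M, ∃ x ∈ M, C x = y) :
    ∀ x ∈ M, ContinuousLinearMap.adjoint C x ∈ M ∧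
      C (ContinuousLinearMap.adjoint C x) = x ∧
      ContinuousLinearMap.adjoint C (C x) = x := by
  intro x hx
  have hleft := fun z (hz : z ∈ M) ↦ C.adjoint_apply_apply_eq_of_norm_apply_eq hC (hiso z hz)
  obtain ⟨y, hy, rfl⟩ := honto x hx
  rw [hleft y hy]
  exact ⟨hy, rfl, hleft _ hx⟩

/-- If a contraction `C` leaves a closed subspace `M` invariant and acts unitarily on it,
then `M` is also invariant for the adjoint `C†`, which restricts to the inverse of `C` on
`M`. -/
theorem adjoint_invariant_of_contraction_unitary_on_invariant_subspace
    {H : Type*} [NormedAddCommGroup H] [InnerProductSpace ℂ H] [CompleteSpace H]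
    (C : H →L[ℂ] H) (hC : ‖C‖ ≤ 1)
    (M : Submodule ℂ H) (hMclosed : IsClosed (M : Set H))
    (hinv : ∀ x ∈ M, C x ∈ M)
    (hiso : ∀ x ∈ M, ‖C x‖ = ‖x‖)
    (honto : ∀ y ∈ M, ∃ x ∈ M, C x = y) :
    ∀ x ∈ M, ContinuousLinearMap.adjoint C x ∈ M ∧
      C (ContinuousLinearMap.adjoint C x) = x ∧
      ContinuousLinearMap.adjoint C (C x) = x :=
  adjoint_invariant_of_contraction_unitary_on_invariant_subspace_general C hC M hiso honto
end

section
/- Let H be a complex Hilbert space, C : H →L[ℂ] H a contraction (‖C‖ ≤ 1), and h ∈ H a vector such that ‖C^n h‖ = 1 for all n ∈ ℕ. Let M be the topological closure of the linear span of { C^n h : n ∈ ℕ }. Then M is an invariant subspace for C (C x ∈ M for all x ∈ M), and C acts isometrically on M: for every v ∈ M, ‖C v‖ = ‖v‖. -/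
/-!
For a contraction `C`, expanding the square gives `‖C†C v - v‖² ≤ ‖v‖² - ‖C v‖²`, so the vectors
on which `C` is isometric form the closed subspace `ker (C†C - 1)`. Each `Cⁿ h` lies in it because
`‖Cⁿ⁺¹ h‖ = ‖Cⁿ h‖`, hence so does the closed span `M`; and `M` is invariant because the span of
an orbit is.
-/

open ContinuousLinearMap Module.End Submodule

theorem Submodule.span_range_pow_apply_mem_invtSubmodule {R M : Type*} [Semiring R]
    [AddCommMonoid M] [Module R M] [TopologicalSpace M] (f : M →L[R] M) (x : M) :
    span R (Set.range fun n : ℕ => (f ^ n) x) ∈ invtSubmodule (f : M →ₗ[R] M) := by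
  rw [mem_invtSubmodule_iff_map_le, map_span]
  refine span_mono ?_
  rintro _ ⟨_, ⟨n, rfl⟩, rfl⟩
  exact ⟨n + 1, by simp only [pow_succ', mul_apply_eq_comp, coe_coe]⟩

namespace ContinuousLinearMap

variable {𝕜 E F : Type*} [RCLike 𝕜] [NormedAddCommGroup E] [InnerProductSpace 𝕜 E]
  [CompleteSpace E] [NormedAddCommGroup F] [InnerProductSpace 𝕜 F] [CompleteSpace F]
  {C : E →L[𝕜] F}

theorem norm_adjoint_apply_apply_sub_sq_le (hC : ‖C‖ ≤ 1) (v : E) :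
    ‖adjoint C (C v) - v‖ ^ 2 ≤ ‖v‖ ^ 2 - ‖C v‖ ^ 2 := by
  have hre : RCLike.re (inner 𝕜 (adjoint C (C v)) v) = ‖C v‖ ^ 2 := by
    rw [adjoint_inner_left, inner_self_eq_norm_sq]
  have hle : ‖adjoint C (C v)‖ ≤ ‖C v‖ :=
    ((adjoint C).le_of_opNorm_le (by rwa [LinearIsometryEquiv.norm_map]) (C v)).trans_eq
      (one_mul _)
  have hsq := pow_le_pow_left₀ (norm_nonneg _) hle 2
  rw [norm_sub_sq (𝕜 := 𝕜), hre]
  linarith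

theorem adjoint_apply_apply_eq_iff_norm_apply_eq (hC : ‖C‖ ≤ 1) {v : E} :
    adjoint C (C v) = v ↔ ‖C v‖ = ‖v‖ := by
  constructor
  · intro hv
    have hsq : ‖C v‖ ^ 2 = ‖v‖ ^ 2 := by
      rw [← inner_self_eq_norm_sq (𝕜 := 𝕜), ← inner_self_eq_norm_sq (𝕜 := 𝕜),
        ← adjoint_inner_left, hv]
    exact (sq_eq_sq₀ (norm_nonneg _) (norm_nonneg _)).mp hsq
  · intro hv
    have := norm_adjoint_apply_apply_sub_sq_le hC v
    rw [hv, sub_self] at this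
    exact sub_eq_zero.mp (by simpa using this.antisymm (sq_nonneg _))

theorem norm_apply_eq_of_mem_topologicalClosure_span (hC : ‖C‖ ≤ 1) {s : Set E}
    (hs : ∀ v ∈ s, ‖C v‖ = ‖v‖) {v : E} (hv : v ∈ (span 𝕜 s).topologicalClosure) :
    ‖C v‖ = ‖v‖ := by
  have hspan : span 𝕜 s ≤ (adjoint C ∘L C).eqLocus (1 : E →L[𝕜] E) :=
    span_le.mpr fun w hw => (adjoint_apply_apply_eq_iff_norm_apply_eq hC).mpr (hs w hw)
  exact (adjoint_apply_apply_eq_iff_norm_apply_eq hC).mp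
    (topologicalClosure_minimal _ hspan (isClosed_eqLocus _ _) hv)

end ContinuousLinearMap

/-- If `C` is a contraction and `‖C^n h‖ = 1` for all `n`, then the closure `M` of the span
of `{C^n h : n ∈ ℕ}` is invariant for `C` and `C` acts isometrically on `M`. -/
theorem contraction_isometric_on_span_of_unit_orbit
    {H : Type*} [NormedAddCommGroup H] [InnerProductSpace ℂ H] [CompleteSpace H]
    (C : H →L[ℂ] H) (hC : ‖C‖ ≤ 1) (h : H) (hh : ∀ n : ℕ, ‖(C ^ n) h‖ = 1) :
    (∀ x ∈ (Submodule.span ℂ (Set.range fun n : ℕ => (C ^ n) h)).topologicalClosure,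
      C x ∈ (Submodule.span ℂ (Set.range fun n : ℕ => (C ^ n) h)).topologicalClosure) ∧
    (∀ v ∈ (Submodule.span ℂ (Set.range fun n : ℕ => (C ^ n) h)).topologicalClosure,
      ‖C v‖ = ‖v‖) := by
  refine ⟨(mem_invtSubmodule_iff_forall_mem_of_mem _).mp
    (topologicalClosure_mem_invtSubmodule (span_range_pow_apply_mem_invtSubmodule C h)), ?_⟩
  refine fun v hv => norm_apply_eq_of_mem_topologicalClosure_span hC ?_ hv
  rintro _ ⟨n, rfl⟩
  change ‖C ((C ^ n) h)‖ = ‖(C ^ n) h‖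
  rw [hh n, ← hh (n + 1), pow_succ', mul_apply_eq_comp]
end

section
/- Let H be a complex Hilbert space, ψ ∈ H a unit vector, and U₀₀, U₁₀, V₀₀, V₁₀ : H →L[ℂ] H bounded operators satisfying: U₀₀† ∘ U₀₀ + U₁₀† ∘ U₁₀ = 1 and V₀₀† ∘ V₀₀ + V₁₀† ∘ V₁₀ = 1; each of U₀₀, U₁₀ *-commutes with each of V₀₀, V₁₀; and the perfect embezzlement relations hold: U₀₀ (V₀₀ ψ) = (1/√2) • ψ, U₁₀ (V₁₀ ψ) = (1/√2) • ψ, U₀₀ (V₁₀ ψ) = 0, U₁₀ (V₀₀ ψ) = 0. Then: (i) U₀₀ ψ = (1/√2) • (V₀₀† ψ) and V₀₀ ψ = (1/√2) • (U₀₀† ψ); (ii) for every n ∈ ℕ, (V₀₀†)^n ψ = (√2)^n • (U₀₀^n ψ) and V₀₀^n ψ = (1/√2)^n • ((U₀₀†)^n ψ); (iii) for every n ∈ ℕ, U₀₀^n ((U₀₀†)^n ψ) = ψ; and (iv) for every n ∈ ℕ, ‖(U₀₀†)^n ψ‖ = 1. -/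
/-!
Write `c = 1 / √2`. Inserting `V₀₀†V₀₀ + V₁₀†V₁₀ = 1` in front of `ψ` and commuting `U₀₀` past
`V₀₀†` and `V₁₀†` gives `U₀₀ ψ = c • V₀₀† ψ`; applying `U₀₀†U₀₀ + U₁₀†U₁₀ = 1` to `V₀₀ ψ` gives
`V₀₀ ψ = c • U₀₀† ψ`. Because the operators involved commute, these one-step relations iterate
to powers. In particular `(U₀₀†)ⁿ ψ = √2ⁿ • V₀₀ⁿ ψ`, while `U₀₀ⁿ V₀₀ⁿ ψ = (U₀₀ V₀₀)ⁿ ψ = cⁿ • ψ`,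
so `U₀₀ⁿ (U₀₀†)ⁿ ψ = ψ` and `‖(U₀₀†)ⁿ ψ‖² = ⟪ψ, U₀₀ⁿ (U₀₀†)ⁿ ψ⟫ = 1`.
-/

open ContinuousLinearMap

/-- Two bounded operators *-commute. -/
def StarCommuteOps {H : Type*} [NormedAddCommGroup H] [InnerProductSpace ℂ H]
    [CompleteSpace H] (A B : H →L[ℂ] H) : Prop :=
  A ∘L B = B ∘L A ∧ (adjoint A) ∘L B = B ∘L (adjoint A)

section

variable {R M : Type*} [Semiring R] [TopologicalSpace M] [AddCommMonoid M] [Module R M]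

theorem ContinuousLinearMap.pow_apply_eq_smul_pow_apply {A B : M →L[R] M} (hAB : Commute A B)
    {c : R} {x : M} (h : A x = c • B x) (n : ℕ) : (A ^ n) x = c ^ n • (B ^ n) x := by
  induction n with
  | zero => simp
  | succ n ih =>
    calc (A ^ (n + 1)) x = c ^ n • A ((B ^ n) x) := by
          rw [pow_succ', mul_apply_eq_comp, ih, map_smul]
      _ = c ^ n • (B ^ n) (c • B x) := by
          rw [← mul_apply_eq_comp, (hAB.pow_right n).eq, mul_apply_eq_comp, h]
      _ = c ^ (n + 1) • (B ^ (n + 1)) x := by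
          rw [map_smul, smul_smul, ← pow_succ, pow_succ B, mul_apply_eq_comp]

theorem ContinuousLinearMap.pow_apply_eq_pow_smul {A : M →L[R] M} {c : R} {x : M}
    (h : A x = c • x) (n : ℕ) : (A ^ n) x = c ^ n • x := by
  simpa using pow_apply_eq_smul_pow_apply (Commute.one_right A) (B := 1) (by simpa using h) n

end

section

variable {𝕜 H : Type*} [RCLike 𝕜] [NormedAddCommGroup H] [InnerProductSpace 𝕜 H]
  [CompleteSpace H]

theorem ContinuousLinearMap.adjoint_pow (A : H →L[𝕜] H) (n : ℕ) :
    adjoint (A ^ n) = adjoint A ^ n := by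
  simp only [← star_eq_adjoint, star_pow]

theorem Commute.adjoint_right_of_adjoint_left {A B : H →L[𝕜] H} (h : Commute (adjoint A) B) :
    Commute A (adjoint B) := by
  simpa only [← star_eq_adjoint, _root_.star_star] using h.star_star

theorem ContinuousLinearMap.adjoint_apply_add_adjoint_apply {A B : H →L[𝕜] H}
    (h : adjoint A ∘L A + adjoint B ∘L B = 1) (x : H) :
    adjoint A (A x) + adjoint B (B x) = x := by
  simpa using congr($h x)

theorem ContinuousLinearMap.apply_eq_adjoint_apply_add_adjoint_apply {U V₀ V₁ : H →L[𝕜] H}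
    (hV : adjoint V₀ ∘L V₀ + adjoint V₁ ∘L V₁ = 1) (h₀ : Commute U (adjoint V₀))
    (h₁ : Commute U (adjoint V₁)) (x : H) :
    U x = adjoint V₀ (U (V₀ x)) + adjoint V₁ (U (V₁ x)) := by
  conv_lhs => rw [← adjoint_apply_add_adjoint_apply hV x]
  rw [map_add, ← mul_apply_eq_comp, h₀.eq, ← mul_apply_eq_comp U, h₁.eq, mul_apply_eq_comp,
    mul_apply_eq_comp]

theorem ContinuousLinearMap.norm_adjoint_apply_of_apply_adjoint_apply {T : H →L[𝕜] H} {x : H}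
    (h : T (adjoint T x) = x) : ‖adjoint T x‖ = ‖x‖ := by
  have : (‖adjoint T x‖ : 𝕜) ^ 2 = (‖x‖ : 𝕜) ^ 2 := by
    rw [← inner_self_eq_norm_sq_to_K, ← inner_self_eq_norm_sq_to_K, adjoint_inner_left, h]
  exact (sq_eq_sq₀ (norm_nonneg _) (norm_nonneg _)).mp (by exact_mod_cast this)

end

theorem embezzlement_constituent_operator_relations_general
    {H : Type*} [NormedAddCommGroup H] [InnerProductSpace ℂ H] [CompleteSpace H]
    (ψ : H) (hψ : ‖ψ‖ = 1) (U00 U10 V00 V10 : H →L[ℂ] H)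
    (hU : (adjoint U00) ∘L U00 + (adjoint U10) ∘L U10 = 1)
    (hV : (adjoint V00) ∘L V00 + (adjoint V10) ∘L V10 = 1)
    (hc00 : StarCommuteOps U00 V00) (hc01 : StarCommuteOps U00 V10)
    (he1 : U00 (V00 ψ) = (1 / Real.sqrt 2 : ℂ) • ψ)
    (he3 : U00 (V10 ψ) = 0)
    (he4 : U10 (V00 ψ) = 0) :
    (U00 ψ = (1 / Real.sqrt 2 : ℂ) • (adjoint V00 ψ) ∧
      V00 ψ = (1 / Real.sqrt 2 : ℂ) • (adjoint U00 ψ)) ∧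
    (∀ n : ℕ, ((adjoint V00) ^ n) ψ = ((Real.sqrt 2 : ℂ) ^ n) • ((U00 ^ n) ψ) ∧
      (V00 ^ n) ψ = ((1 / Real.sqrt 2 : ℂ) ^ n) • (((adjoint U00) ^ n) ψ)) ∧
    (∀ n : ℕ, (U00 ^ n) (((adjoint U00) ^ n) ψ) = ψ) ∧
    (∀ n : ℕ, ‖((adjoint U00) ^ n) ψ‖ = 1) := by
  have hs : (Real.sqrt 2 : ℂ) ≠ 0 := by norm_num
  have hU₀V₀adj : Commute U00 (adjoint V00) := Commute.adjoint_right_of_adjoint_left hc00.2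
  have hU₀V₁adj : Commute U00 (adjoint V10) := Commute.adjoint_right_of_adjoint_left hc01.2
  have hUψ : U00 ψ = (1 / Real.sqrt 2 : ℂ) • adjoint V00 ψ := by
    rw [apply_eq_adjoint_apply_add_adjoint_apply hV hU₀V₀adj hU₀V₁adj, he1, he3, map_smul,
      map_zero, add_zero]
  have hVψ : V00 ψ = (1 / Real.sqrt 2 : ℂ) • adjoint U00 ψ := by
    rw [← adjoint_apply_add_adjoint_apply hU (V00 ψ), he1, he4, map_smul, map_zero, add_zero]
  have hVψ' : adjoint V00 ψ = (Real.sqrt 2 : ℂ) • U00 ψ := by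
    rw [hUψ, smul_smul, mul_one_div_cancel hs, one_smul]
  have hUψ' : adjoint U00 ψ = (Real.sqrt 2 : ℂ) • V00 ψ := by
    rw [hVψ, smul_smul, mul_one_div_cancel hs, one_smul]
  have hpow n := And.intro (pow_apply_eq_smul_pow_apply hU₀V₀adj.symm hVψ' n)
    (pow_apply_eq_smul_pow_apply (Commute.symm hc00.2) hVψ n)
  have hpow_adjoint_cancel (n : ℕ) : (U00 ^ n) ((adjoint U00 ^ n) ψ) = ψ := by
    rw [pow_apply_eq_smul_pow_apply hc00.2 hUψ' n, map_smul, ← mul_apply_eq_comp,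
      ← Commute.mul_pow hc00.1, pow_apply_eq_pow_smul he1, smul_smul, ← mul_pow,
      mul_one_div_cancel hs, one_pow, one_smul]
  refine ⟨⟨hUψ, hVψ⟩, hpow, hpow_adjoint_cancel, fun n => ?_⟩
  rw [← adjoint_pow, norm_adjoint_apply_of_apply_adjoint_apply, hψ]
  rw [adjoint_pow, hpow_adjoint_cancel]

/-- Structural relations in a perfect embezzlement protocol: the constituent operators
`U₀₀, U₁₀, V₀₀, V₁₀` satisfy the displayed iteration identities, and in particular
`‖(U₀₀†)^n ψ‖ = 1` for all `n`. -/
theorem embezzlement_constituent_operator_relations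
    {H : Type*} [NormedAddCommGroup H] [InnerProductSpace ℂ H] [CompleteSpace H]
    (ψ : H) (hψ : ‖ψ‖ = 1) (U00 U10 V00 V10 : H →L[ℂ] H)
    (hU : (adjoint U00) ∘L U00 + (adjoint U10) ∘L U10 = 1)
    (hV : (adjoint V00) ∘L V00 + (adjoint V10) ∘L V10 = 1)
    (hc00 : StarCommuteOps U00 V00) (hc01 : StarCommuteOps U00 V10)
    (hc10 : StarCommuteOps U10 V00) (hc11 : StarCommuteOps U10 V10)
    (he1 : U00 (V00 ψ) = (1 / Real.sqrt 2 : ℂ) • ψ)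
    (he2 : U10 (V10 ψ) = (1 / Real.sqrt 2 : ℂ) • ψ)
    (he3 : U00 (V10 ψ) = 0)
    (he4 : U10 (V00 ψ) = 0) :
    (U00 ψ = (1 / Real.sqrt 2 : ℂ) • (adjoint V00 ψ) ∧
      V00 ψ = (1 / Real.sqrt 2 : ℂ) • (adjoint U00 ψ)) ∧
    (∀ n : ℕ, ((adjoint V00) ^ n) ψ = ((Real.sqrt 2 : ℂ) ^ n) • ((U00 ^ n) ψ) ∧
      (V00 ^ n) ψ = ((1 / Real.sqrt 2 : ℂ) ^ n) • (((adjoint U00) ^ n) ψ)) ∧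
    (∀ n : ℕ, (U00 ^ n) (((adjoint U00) ^ n) ψ) = ψ) ∧
    (∀ n : ℕ, ‖((adjoint U00) ^ n) ψ‖ = 1) :=
  embezzlement_constituent_operator_relations_general ψ hψ U00 U10 V00 V10 hU hV hc00 hc01 he1 he3
    he4
end

section
/- Uniqueness of Schmidt coefficients: let X and Y be types and z ∈ ℓ²(X × Y). Suppose d, c : ℕ → ℝ are nonnegative nonincreasing sequences with ∑' k, (d k)² < ∞ and ∑' k, (c k)² < ∞, u, w : ℕ → ℓ²(X) and v, t : ℕ → ℓ²(Y) are orthonormal sequences, and for every (x, y) ∈ X × Y both z (x, y) = ∑' k, (d k : ℂ) * (u k) x * (v k) y and z (x, y) = ∑' k, (c k : ℂ) * (w k) x * (t k) y. Then c = d. -/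
/-!
Testing `z` against the product vectors `w j ⊗ t j` of the second decomposition and expanding
with the first one gives `c j = ∑ m, d m * ⟪w j, u m⟫ * ⟪t j, v m⟫`. By AM–GM and Bessel's
inequality (in both indices) the weights `ρ m = ∑ j < n, |⟪w j, u m⟫| * |⟪t j, v m⟫|` satisfy
`0 ≤ ρ m ≤ 1` and `∑ m, ρ m ≤ n`, so since `d` is nonincreasing,
`c 0 + ⋯ + c (n-1) ≤ ∑ m, d m * ρ m ≤ d 0 + ⋯ + d (n-1)`. By symmetry the partial sums of `c`
and `d` coincide, hence `c = d`.
-/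

open Finset
open scoped InnerProductSpace

theorem Orthonormal.sum_norm_inner_mul_norm_inner_le_one {ι 𝕜 E F : Type*} [RCLike 𝕜]
    [NormedAddCommGroup E] [InnerProductSpace 𝕜 E] [NormedAddCommGroup F]
    [InnerProductSpace 𝕜 F] {w : ι → E} {t : ι → F} (hw : Orthonormal 𝕜 w)
    (ht : Orthonormal 𝕜 t) (s : Finset ι) {a : E} {b : F} (ha : ‖a‖ ≤ 1) (hb : ‖b‖ ≤ 1) :
    ∑ j ∈ s, ‖⟪w j, a⟫_𝕜‖ * ‖⟪t j, b⟫_𝕜‖ ≤ 1 :=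
  calc ∑ j ∈ s, ‖⟪w j, a⟫_𝕜‖ * ‖⟪t j, b⟫_𝕜‖
      ≤ ∑ j ∈ s, (‖⟪w j, a⟫_𝕜‖ ^ 2 + ‖⟪t j, b⟫_𝕜‖ ^ 2) / 2 :=
        sum_le_sum fun j _ => by linarith [two_mul_le_add_sq ‖⟪w j, a⟫_𝕜‖ ‖⟪t j, b⟫_𝕜‖]
    _ = (∑ j ∈ s, ‖⟪w j, a⟫_𝕜‖ ^ 2 + ∑ j ∈ s, ‖⟪t j, b⟫_𝕜‖ ^ 2) / 2 := by
        rw [← sum_add_distrib, sum_div]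
    _ ≤ (‖a‖ ^ 2 + ‖b‖ ^ 2) / 2 := by
        gcongr
        · exact hw.sum_inner_products_le a
        · exact ht.sum_inner_products_le b
    _ ≤ 1 := by nlinarith [norm_nonneg a, norm_nonneg b]

theorem Orthonormal.summable_smul {ι 𝕜 E : Type*} [RCLike 𝕜] [NormedAddCommGroup E]
    [InnerProductSpace 𝕜 E] [CompleteSpace E] {T : ι → E} (hT : Orthonormal 𝕜 T) {a : ι → 𝕜}
    (ha : Summable fun k => ‖a k‖ ^ 2) : Summable fun k => a k • T k := by
  simpa only [LinearIsometry.toSpanSingleton_apply] using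
    (hT.orthogonalFamily.summable_iff_norm_sq_summable a).2 ha

theorem summable_mul_of_antitone {d ρ : ℕ → ℝ} (hd0 : ∀ k, 0 ≤ d k) (hd : Antitone d)
    (hρ0 : ∀ m, 0 ≤ ρ m) (hρ : Summable ρ) : Summable fun m => d m * ρ m :=
  (hρ.mul_left (d 0)).of_nonneg_of_le (fun m => mul_nonneg (hd0 m) (hρ0 m))
    fun m => mul_le_mul_of_nonneg_right (hd (Nat.zero_le m)) (hρ0 m)

theorem tsum_mul_le_sum_range_of_antitone {d ρ : ℕ → ℝ} {n : ℕ} (hd0 : ∀ k, 0 ≤ d k)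
    (hd : Antitone d) (hρ0 : ∀ m, 0 ≤ ρ m) (hρ1 : ∀ m, ρ m ≤ 1) (hρ : Summable ρ)
    (hρn : ∑' m, ρ m ≤ n) :
    ∑' m, d m * ρ m ≤ ∑ m ∈ range n, d m := by
  set g : ℕ → ℝ := fun m => if m < n then d m - d n else 0
  have hg : ∀ m ∉ range n, g m = 0 := fun m hm => if_neg (by simpa using hm)
  have hle : ∀ m, d m * ρ m ≤ g m + d n * ρ m := fun m => by
    by_cases hm : m < n
    · simp only [g, if_pos hm]; nlinarith [hd hm.le, hρ1 m, hρ0 m]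
    · simp only [g, if_neg hm]; nlinarith [hd (not_lt.1 hm), hρ0 m]
  calc ∑' m, d m * ρ m
      ≤ ∑' m, (g m + d n * ρ m) :=
        (summable_mul_of_antitone hd0 hd hρ0 hρ).tsum_le_tsum hle
          ((summable_of_ne_finset_zero hg).add (hρ.mul_left _))
    _ = ∑ m ∈ range n, (d m - d n) + d n * ∑' m, ρ m := by
        rw [(summable_of_ne_finset_zero hg).tsum_add (hρ.mul_left _), tsum_eq_sum hg,
          tsum_mul_left]
        congr 1
        exact sum_congr rfl fun m hm => if_pos (mem_range.1 hm)
    _ ≤ ∑ m ∈ range n, d m := by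
        rw [sum_sub_distrib, sum_const, card_range, nsmul_eq_mul]
        nlinarith [hd0 n]

namespace l2

variable {X Y : Type*}

theorem summable_norm_sq (e : l2 X) : Summable fun x => ‖e x‖ ^ 2 := by
  have h := (lp.memℓp e).summable (p := 2) (by norm_num)
  rw [ENNReal.toReal_ofNat] at h
  exact_mod_cast h

theorem memℓp_mul (e : l2 X) (f : l2 Y) : Memℓp (fun p : X × Y => e p.1 * f p.2) 2 := by
  refine memℓp_gen ?_
  rw [ENNReal.toReal_ofNat]
  refine ((summable_norm_sq e).mul_of_nonneg (summable_norm_sq f) (fun _ => by positivity)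
    fun _ => by positivity).congr fun p => ?_
  rw [norm_mul, Real.rpow_two, mul_pow]

noncomputable def tensor (e : l2 X) (f : l2 Y) : l2 (X × Y) :=
  ⟨fun p => e p.1 * f p.2, memℓp_mul e f⟩

@[simp] theorem tensor_apply (e : l2 X) (f : l2 Y) (p : X × Y) :
    tensor e f p = e p.1 * f p.2 := rfl

theorem inner_tensor_tensor (e e' : l2 X) (f f' : l2 Y) :
    ⟪tensor e f, tensor e' f'⟫_ℂ = ⟪e, e'⟫_ℂ * ⟪f, f'⟫_ℂ := by
  have he := summable_norm_iff.2 (lp.summable_inner (𝕜 := ℂ) e e')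
  have hf := summable_norm_iff.2 (lp.summable_inner (𝕜 := ℂ) f f')
  rw [lp.inner_eq_tsum, lp.inner_eq_tsum, lp.inner_eq_tsum, tsum_mul_tsum_of_summable_norm he hf]
  refine tsum_congr fun p => ?_
  simp only [tensor_apply, RCLike.inner_apply, map_mul]
  ring

theorem orthonormal_tensor {u : ℕ → l2 X} {v : ℕ → l2 Y} (hu : Orthonormal ℂ u)
    (hv : Orthonormal ℂ v) : Orthonormal ℂ fun k => tensor (u k) (v k) := by
  rw [orthonormal_iff_ite] at hu hv ⊢
  intro i j
  rw [inner_tensor_tensor, hu, hv]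
  split_ifs <;> simp

structure IsSchmidtExpansion (z : l2 (X × Y)) (d : ℕ → ℝ) (u : ℕ → l2 X) (v : ℕ → l2 Y) :
    Prop where
  orthonormal_left : Orthonormal ℂ u
  orthonormal_right : Orthonormal ℂ v
  summable_sq : Summable fun k => d k ^ 2
  apply_eq_tsum : ∀ x y, z (x, y) = ∑' k, (d k : ℂ) * u k x * v k y

namespace IsSchmidtExpansion

variable {z : l2 (X × Y)} {d c : ℕ → ℝ} {u w : ℕ → l2 X} {v t : ℕ → l2 Y}

theorem hasSum (h : IsSchmidtExpansion z d u v) :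
    HasSum (fun k => (d k : ℂ) • tensor (u k) (v k)) z := by
  have hs := (orthonormal_tensor h.orthonormal_left h.orthonormal_right).summable_smul
    (a := fun k => (d k : ℂ))
    (by simpa only [Complex.norm_real, Real.norm_eq_abs, sq_abs] using h.summable_sq)
  convert hs.hasSum
  ext ⟨x, y⟩
  refine (h.apply_eq_tsum x y).trans
    (.trans ?_ ((lp.evalCLM ℂ _ 2 (x, y)).hasSum hs.hasSum).tsum_eq)
  exact tsum_congr fun k => mul_assoc _ _ _

theorem hasSum_inner_tensor (h : IsSchmidtExpansion z d u v) (e : l2 X) (f : l2 Y) :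
    HasSum (fun k => (d k : ℂ) * (⟪e, u k⟫_ℂ * ⟪f, v k⟫_ℂ)) ⟪tensor e f, z⟫_ℂ := by
  simpa only [map_smul, innerSL_apply_apply, inner_tensor_tensor, smul_eq_mul] using
    (innerSL ℂ (tensor e f)).hasSum h.hasSum

theorem inner_tensor_eq (h : IsSchmidtExpansion z d u v) (j : ℕ) :
    ⟪tensor (u j) (v j), z⟫_ℂ = d j := by
  refine (h.hasSum_inner_tensor (u j) (v j)).unique ?_
  convert hasSum_ite_eq j (d j : ℂ) using 2 with k
  rw [orthonormal_iff_ite.1 h.orthonormal_left, orthonormal_iff_ite.1 h.orthonormal_right]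
  rcases eq_or_ne k j with rfl | hkj
  · simp
  · simp [hkj, hkj.symm]

theorem sum_range_le (hd : IsSchmidtExpansion z d u v) (hc : IsSchmidtExpansion z c w t)
    (hd0 : ∀ k, 0 ≤ d k) (hd_anti : Antitone d) (hc0 : ∀ k, 0 ≤ c k) (n : ℕ) :
    ∑ j ∈ range n, c j ≤ ∑ j ∈ range n, d j := by
  have hu := hd.orthonormal_left
  have hv := hd.orthonormal_right
  have hw := hc.orthonormal_left
  have ht := hc.orthonormal_right
  set ρ : ℕ → ℝ := fun m => ∑ j ∈ range n, ‖⟪w j, u m⟫_ℂ‖ * ‖⟪t j, v m⟫_ℂ‖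
  have hρ0 : ∀ m, 0 ≤ ρ m := fun m => sum_nonneg fun j _ => by positivity
  have hρ1 : ∀ m, ρ m ≤ 1 := fun m =>
    hw.sum_norm_inner_mul_norm_inner_le_one ht _ (hu.1 m).le (hv.1 m).le
  have hρN : ∀ N, ∑ m ∈ range N, ρ m ≤ n := fun N => by
    have hrow : ∀ j, ∑ m ∈ range N, ‖⟪w j, u m⟫_ℂ‖ * ‖⟪t j, v m⟫_ℂ‖ ≤ 1 := fun j => by
      simp only [norm_inner_symm (w j), norm_inner_symm (t j)]
      exact hu.sum_norm_inner_mul_norm_inner_le_one hv _ (hw.1 j).le (ht.1 j).le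
    rw [sum_comm]
    simpa using sum_le_card_nsmul (range n) _ 1 fun j _ => hrow j
  have hρ : Summable ρ := summable_of_sum_range_le hρ0 hρN
  have hexp : HasSum (fun m => ∑ j ∈ range n, (d m : ℂ) * (⟪w j, u m⟫_ℂ * ⟪t j, v m⟫_ℂ))
      (∑ j ∈ range n, (c j : ℂ)) :=
    hasSum_sum fun j _ => hc.inner_tensor_eq j ▸ hd.hasSum_inner_tensor (w j) (t j)
  have hterm : ∀ m, ‖∑ j ∈ range n, (d m : ℂ) * (⟪w j, u m⟫_ℂ * ⟪t j, v m⟫_ℂ)‖ ≤ d m * ρ m :=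
    fun m => by
      rw [← mul_sum, norm_mul, Complex.norm_real, Real.norm_of_nonneg (hd0 m)]
      refine mul_le_mul_of_nonneg_left ?_ (hd0 m)
      exact (norm_sum_le _ _).trans_eq (sum_congr rfl fun j _ => norm_mul _ _)
  calc ∑ j ∈ range n, c j = ‖(∑ j ∈ range n, c j : ℂ)‖ := by
        rw [← Complex.ofReal_sum, Complex.norm_real,
          Real.norm_of_nonneg (sum_nonneg fun j _ => hc0 j)]
    _ ≤ ∑' m, d m * ρ m :=
        hexp.norm_le_of_bounded (summable_mul_of_antitone hd0 hd_anti hρ0 hρ).hasSum hterm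
    _ ≤ ∑ j ∈ range n, d j := tsum_mul_le_sum_range_of_antitone hd0 hd_anti hρ0 hρ1 hρ
        (Real.tsum_le_of_sum_range_le hρ0 hρN)

end IsSchmidtExpansion

end l2

/-- Uniqueness of Schmidt coefficients: two Schmidt decompositions of the same vector
`z ∈ ℓ²(X × Y)` with nonnegative nonincreasing coefficient sequences have the same
coefficients. -/
theorem schmidt_coefficients_unique {X Y : Type*} (z : l2 (X × Y))
    (d c : ℕ → ℝ)
    (hd0 : ∀ k, 0 ≤ d k) (hdmono : ∀ k, d (k + 1) ≤ d k)
    (hc0 : ∀ k, 0 ≤ c k) (hcmono : ∀ k, c (k + 1) ≤ c k)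
    (hdsum : Summable fun k => (d k) ^ 2) (hcsum : Summable fun k => (c k) ^ 2)
    (u w : ℕ → l2 X) (v t : ℕ → l2 Y)
    (hu : Orthonormal ℂ u) (hv : Orthonormal ℂ v)
    (hw : Orthonormal ℂ w) (ht : Orthonormal ℂ t)
    (hzd : ∀ (x : X) (y : Y), z (x, y) = ∑' k, (d k : ℂ) * (u k) x * (v k) y)
    (hzc : ∀ (x : X) (y : Y), z (x, y) = ∑' k, (c k : ℂ) * (w k) x * (t k) y) :
    c = d := by
  have hd : l2.IsSchmidtExpansion z d u v := ⟨hu, hv, hdsum, hzd⟩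
  have hc : l2.IsSchmidtExpansion z c w t := ⟨hw, ht, hcsum, hzc⟩
  have hsum : ∀ n, ∑ j ∈ range n, c j = ∑ j ∈ range n, d j := fun n =>
    le_antisymm (hd.sum_range_le hc hd0 (antitone_nat_of_succ_le hdmono) hc0 n)
      (hc.sum_range_le hd hc0 (antitone_nat_of_succ_le hcmono) hd0 n)
  funext k
  have h := hsum (k + 1)
  rwa [sum_range_succ, sum_range_succ, hsum k, add_right_inj] at h
end
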